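/- arXiv:math/0606441 — 4 statements merged into one kernel-verified Lean document; each statement's English description precedes it below -/
import Mathlib

section
/- Let d ≥ 2, let ρ be a real number with −1/(d−1) < ρ < 1 (so that the same bound also holds with d+1 in place of d, i.e. −1/d < ρ < 1 in the case ρ < 0), and let τ be a real number. Then the reduction in conditional variance obtained by adding a (d+1)-st identically correlated predictor is X(d+1) = V(d) − V(d+1) = τ²/(1−ρ) + (ρτ²/(1−ρ)) · ( d²/(1+(d−1)ρ) − (d+1)²/(1+dρ) ), and this expression simplifies to X(d+1) = τ²(1−ρ)/((1+dρ)(1+(d−1)ρ)). -/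
open Matrix

/-- The `d × d` equicorrelation matrix `(1-ρ)·I + ρ·𝟙𝟙ᵀ`. -/
def equicorr (d : ℕ) (ρ : ℝ) : Matrix (Fin d) (Fin d) ℝ :=
  (1 - ρ) • (1 : Matrix (Fin d) (Fin d) ℝ) + ρ • Matrix.of fun _ _ => (1 : ℝ)

/-- The residual conditional variance `V(d) = 1 - τ̄ᵀ Σ₁₁⁻¹ τ̄`, where
`τ̄ = τ·𝟙 ∈ ℝᵈ`. -/
noncomputable def Vres (d : ℕ) (ρ τ : ℝ) : ℝ :=
  1 - (fun _ : Fin d => τ) ⬝ᵥ ((equicorr d ρ)⁻¹ *ᵥ fun _ : Fin d => τ)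

/-
The all-ones vector is an eigenvector of the equicorrelation matrix with eigenvalue
`1 + (d-1)ρ`, so `Σ₁₁⁻¹ τ̄ = τ̄ / (1 + (d-1)ρ)` and `V(d) = 1 - dτ² / (1 + (d-1)ρ)`.
Both formulas for `X(d+1)` are then identities of rational functions in `d` and `ρ`,
valid once `1 - ρ`, `1 + (d-1)ρ` and `1 + dρ` are nonzero; the last two are positive
because `1 + (d-1)ρ = (d(1 + dρ) + (1 - ρ)) / (d + 1)`.
-/

section Equicorr

variable {d : ℕ} {ρ : ℝ}

lemma equicorr_mulVec_apply (v : Fin d → ℝ) (i : Fin d) :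
    (equicorr d ρ *ᵥ v) i = (1 - ρ) * v i + ρ * ∑ j, v j := by
  rw [equicorr, add_mulVec, smul_mulVec, smul_mulVec, one_mulVec]
  simp [mulVec, dotProduct, Finset.mul_sum]

lemma sum_equicorr_mulVec (v : Fin d → ℝ) :
    ∑ i, (equicorr d ρ *ᵥ v) i = (1 + ((d : ℝ) - 1) * ρ) * ∑ i, v i := by
  simp only [equicorr_mulVec_apply, Finset.sum_add_distrib, ← Finset.mul_sum,
    Finset.sum_const, Finset.card_univ, Fintype.card_fin, nsmul_eq_mul]
  ring

lemma equicorr_mulVec_const (c : ℝ) :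
    equicorr d ρ *ᵥ (fun _ => c) = fun _ => (1 + ((d : ℝ) - 1) * ρ) * c := by
  ext i
  simp only [equicorr_mulVec_apply, Finset.sum_const, Finset.card_univ, Fintype.card_fin,
    nsmul_eq_mul]
  ring

lemma isUnit_equicorr (h₁ : 1 - ρ ≠ 0) (h₂ : 1 + ((d : ℝ) - 1) * ρ ≠ 0) :
    IsUnit (equicorr d ρ) := by
  refine mulVec_injective_iff_isUnit.mp fun x y hxy => ?_
  have hsum : ∑ i, x i = ∑ i, y i := by
    have := congrArg (fun v => ∑ i, v i) hxy
    simp only [sum_equicorr_mulVec] at this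
    exact mul_left_cancel₀ h₂ this
  ext i
  have := congrFun hxy i
  rw [equicorr_mulVec_apply, equicorr_mulVec_apply, hsum] at this
  exact mul_left_cancel₀ h₁ (add_right_cancel this)

lemma equicorr_inv_mulVec_const (h₁ : 1 - ρ ≠ 0) (h₂ : 1 + ((d : ℝ) - 1) * ρ ≠ 0) (τ : ℝ) :
    (equicorr d ρ)⁻¹ *ᵥ (fun _ => τ) = fun _ => τ / (1 + ((d : ℝ) - 1) * ρ) := by
  have := (isUnit_equicorr h₁ h₂).invertible
  refine inv_mulVec_eq_vec ?_
  rw [equicorr_mulVec_const, mul_div_cancel₀ _ h₂]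

end Equicorr

lemma Vres_eq {d : ℕ} {ρ : ℝ} (h₁ : 1 - ρ ≠ 0) (h₂ : 1 + ((d : ℝ) - 1) * ρ ≠ 0) (τ : ℝ) :
    Vres d ρ τ = 1 - d * τ ^ 2 / (1 + ((d : ℝ) - 1) * ρ) := by
  simp only [Vres, equicorr_inv_mulVec_const h₁ h₂, dotProduct, Finset.sum_const,
    Finset.card_univ, Fintype.card_fin, nsmul_eq_mul]
  ring

theorem variance_reduction_eq_general (d : ℕ) (ρ : ℝ)
    (hρ₁' : -1 / (d : ℝ) < ρ) (hρ₂ : ρ < 1) (τ : ℝ) :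
    Vres d ρ τ - Vres (d + 1) ρ τ =
        τ ^ 2 / (1 - ρ) +
          (ρ * τ ^ 2 / (1 - ρ)) *
            ((d : ℝ) ^ 2 / (1 + ((d : ℝ) - 1) * ρ) -
              ((d : ℝ) + 1) ^ 2 / (1 + (d : ℝ) * ρ)) ∧
      Vres d ρ τ - Vres (d + 1) ρ τ =
        τ ^ 2 * (1 - ρ) / ((1 + (d : ℝ) * ρ) * (1 + ((d : ℝ) - 1) * ρ)) := by
  have hc : 0 < 1 - ρ := by linarith
  have hk' : 0 < 1 + (d : ℝ) * ρ := by
    rcases Nat.eq_zero_or_pos d with rfl | hd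
    · simp
    · have := (div_lt_iff₀ (by exact_mod_cast hd)).mp hρ₁'
      linarith
  have hk : 0 < 1 + ((d : ℝ) - 1) * ρ := by
    have key : (1 + ((d : ℝ) - 1) * ρ) * (d + 1) = d * (1 + d * ρ) + (1 - ρ) := by ring
    have : 0 < (1 + ((d : ℝ) - 1) * ρ) * (d + 1) :=
      key ▸ add_pos_of_nonneg_of_pos (mul_nonneg d.cast_nonneg hk'.le) hc
    exact pos_of_mul_pos_left this (by positivity)
  have hV : Vres (d + 1) ρ τ = 1 - (d + 1) * τ ^ 2 / (1 + (d : ℝ) * ρ) := by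
    have h : 1 + (((d + 1 : ℕ) : ℝ) - 1) * ρ = 1 + d * ρ := by push_cast; ring
    rw [Vres_eq hc.ne' (h ▸ hk'.ne'), h, Nat.cast_succ]
  rw [hV, Vres_eq hc.ne' hk.ne']
  constructor <;> field_simp <;> ring

/-- For `d ≥ 2` and `-1/(d-1) < ρ < 1` (with the bound also holding for `d+1`
predictors, i.e. `-1/d < ρ < 1`), the reduction in conditional variance from
adding a `(d+1)`-st identically correlated predictor is
`X(d+1) = V(d) - V(d+1) = τ²/(1-ρ) + (ρτ²/(1-ρ))(d²/(1+(d-1)ρ) - (d+1)²/(1+dρ))`,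
which simplifies to `τ²(1-ρ)/((1+dρ)(1+(d-1)ρ))`. -/
theorem variance_reduction_eq (d : ℕ) (hd : 2 ≤ d) (ρ : ℝ)
    (hρ₁ : -1 / ((d : ℝ) - 1) < ρ) (hρ₁' : -1 / (d : ℝ) < ρ) (hρ₂ : ρ < 1) (τ : ℝ) :
    Vres d ρ τ - Vres (d + 1) ρ τ =
        τ ^ 2 / (1 - ρ) +
          (ρ * τ ^ 2 / (1 - ρ)) *
            ((d : ℝ) ^ 2 / (1 + ((d : ℝ) - 1) * ρ) -
              ((d : ℝ) + 1) ^ 2 / (1 + (d : ℝ) * ρ)) ∧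
      Vres d ρ τ - Vres (d + 1) ρ τ =
        τ ^ 2 * (1 - ρ) / ((1 + (d : ℝ) * ρ) * (1 + ((d : ℝ) - 1) * ρ)) :=
  variance_reduction_eq_general d ρ hρ₁' hρ₂ τ
end

section
/- (Flat maximum inequality.) Let R be a d × d real symmetric positive semidefinite matrix with unit diagonal (R_ii = 1) and nonnegative entries (R_ij ≥ 0). Let v, w ∈ ℝᵈ have nonnegative entries with Σᵢ v_i = 1 and Σᵢ w_i = 1, and suppose vᵀRv > 0 and wᵀRw > 0. Then the correlation r(v,w) = vᵀRw / √((vᵀRv)(wᵀRw)) between the two weighted sums satisfies r(v,w) ≥ vᵀRw = Σᵢ Σⱼ v_i w_j R_ij. -/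
/-!
Testing positive semidefiniteness of `R` against `eᵢ - eⱼ` gives `2 Rᵢⱼ ≤ Rᵢᵢ + Rⱼⱼ = 2`, so every
entry of a correlation matrix is at most `1`. Hence for probability vectors the variances
`vᵀRv` and `wᵀRw` are at most `(∑ vᵢ)² = 1` and `(∑ wᵢ)² = 1`, the denominator of `r(v,w)` lies in
`(0, 1]`, and dividing the covariance `vᵀRw`, nonnegative because all entries are, can only
increase it.
-/

open Matrix

namespace Matrix

variable {n : Type*} [Fintype n]

theorem PosSemidef.two_mul_apply_le_add {R : Type*} [CommRing R] [PartialOrder R] [StarRing R]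
    [TrivialStar R] [IsOrderedRing R] {A : Matrix n n R} (hA : A.PosSemidef) (i j : n) :
    2 * A i j ≤ A i i + A j j := by
  classical
  have hsymm : A j i = A i j := by simpa using congrFun (congrFun hA.isHermitian.eq i) j
  have h := hA.dotProduct_mulVec_nonneg (Pi.single i 1 - Pi.single j 1)
  simp only [star_trivial, mulVec_sub, mulVec_single, MulOpposite.op_one, one_smul, dotProduct_sub,
    sub_dotProduct, single_dotProduct, col_apply, one_mul, hsymm, sub_nonneg, tsub_le_iff_right] at h
  linear_combination h

theorem PosSemidef.apply_le_one {A : Matrix n n ℝ} (hA : A.PosSemidef) (hdiag : ∀ i, A i i = 1)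
    (i j : n) : A i j ≤ 1 := by
  linarith [hA.two_mul_apply_le_add i j, hdiag i, hdiag j]

variable {m R : Type*} [Fintype m] [CommSemiring R] [PartialOrder R] [IsOrderedRing R]

theorem dotProduct_mulVec_nonneg_of_nonneg {A : Matrix m n R} (hA : ∀ i j, 0 ≤ A i j)
    {x : m → R} {y : n → R} (hx : 0 ≤ x) (hy : 0 ≤ y) : 0 ≤ x ⬝ᵥ (A *ᵥ y) :=
  dotProduct_nonneg_of_nonneg hx fun i => dotProduct_nonneg_of_nonneg (hA i) hy

theorem dotProduct_mulVec_le_sum_mul_sum {A : Matrix m n R} (hA : ∀ i j, A i j ≤ 1)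
    {x : m → R} {y : n → R} (hx : 0 ≤ x) (hy : 0 ≤ y) :
    x ⬝ᵥ (A *ᵥ y) ≤ (∑ i, x i) * ∑ j, y j := by
  rw [Finset.sum_mul_sum]
  simp only [dotProduct, mulVec, Finset.mul_sum]
  exact Finset.sum_le_sum fun i _ => Finset.sum_le_sum fun j _ =>
    mul_le_mul_of_nonneg_left (mul_le_of_le_one_left (hy j) (hA i j)) (hx i)

end Matrix

/-- Flat maximum inequality: if `R` is a symmetric positive semidefinite
correlation matrix with unit diagonal and nonnegative entries, and `v`, `w`
are nonnegative weight vectors summing to `1` with `vᵀRv > 0` and `wᵀRw > 0`,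
then the correlation `r(v,w) = vᵀRw / √((vᵀRv)(wᵀRw))` between the two
weighted sums is at least `vᵀRw = Σᵢ Σⱼ vᵢ wⱼ Rᵢⱼ`. -/
theorem flat_maximum_inequality (d : ℕ) (R : Matrix (Fin d) (Fin d) ℝ)
    (hR : R.PosSemidef) (hdiag : ∀ i, R i i = 1) (hnonneg : ∀ i j, 0 ≤ R i j)
    (v w : Fin d → ℝ) (hv : ∀ i, 0 ≤ v i) (hw : ∀ i, 0 ≤ w i)
    (hvsum : ∑ i, v i = 1) (hwsum : ∑ i, w i = 1)
    (hvv : 0 < v ⬝ᵥ (R *ᵥ v)) (hww : 0 < w ⬝ᵥ (R *ᵥ w)) :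
    v ⬝ᵥ (R *ᵥ w) / Real.sqrt ((v ⬝ᵥ (R *ᵥ v)) * (w ⬝ᵥ (R *ᵥ w)))
      ≥ v ⬝ᵥ (R *ᵥ w) := by
  have hle_one := hR.apply_le_one hdiag
  have hvv_le : v ⬝ᵥ (R *ᵥ v) ≤ 1 := by
    simpa [hvsum] using dotProduct_mulVec_le_sum_mul_sum hle_one hv hv
  have hww_le : w ⬝ᵥ (R *ᵥ w) ≤ 1 := by
    simpa [hwsum] using dotProduct_mulVec_le_sum_mul_sum hle_one hw hw
  exact le_div_self (dotProduct_mulVec_nonneg_of_nonneg hnonneg hv hw)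
    (Real.sqrt_pos.2 (mul_pos hvv hww))
    (Real.sqrt_le_one.2 (mul_le_one₀ hvv_le hww.le hww_le))
end

section
/- (Flat maximum effect, equal-weights bound.) Let R be a d × d real symmetric positive semidefinite matrix with unit diagonal (R_ii = 1) and nonnegative entries (R_ij ≥ 0). Let w ∈ ℝᵈ have nonnegative entries with Σᵢ w_i = 1, and let v = (1/d, …, 1/d) be the equal-weight vector; suppose vᵀRv > 0 and wᵀRw > 0. Then the correlation between the equal-weight sum and the arbitrarily weighted sum satisfies r(v,w) = vᵀRw / √((vᵀRv)(wᵀRw)) ≥ (1/d) Σᵢ minⱼ R_ij; that is, r(v,w) is bounded below by the smallest row average attainable by picking, for each row i, its minimal entry. -/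
/-!
Both quadratic forms in the denominator are weighted averages of entries of `R` over probability
weights, and every entry of a positive semidefinite matrix with unit diagonal is at most `1`
(test the form on `eᵢ - eⱼ`), so the denominator is at most `1`. The numerator averages over the
rows `i` a `w`-weighted mean of row `i`, which is at least `minⱼ Rᵢⱼ`; as this lower bound is
nonnegative, dividing by a denominator in `(0, 1]` preserves it.
-/

open Matrix

theorem Matrix.PosSemidef.two_mul_apply_le_add_s10 {n : Type*} [Fintype n]
    {A : Matrix n n ℝ} (hA : A.PosSemidef) (i j : n) : 2 * A i j ≤ A i i + A j j := by
  classical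
  have hsymm : A j i = A i j := hA.isHermitian.apply i j
  have h := hA.dotProduct_mulVec_nonneg (Pi.single i 1 - Pi.single j 1)
  simp only [star_trivial, mulVec_sub, dotProduct_sub, sub_dotProduct, mulVec_single_one,
    single_one_dotProduct, col_apply, hsymm] at h
  linarith

section stdSimplex

variable {n : Type*} [Fintype n] {u w x : n → ℝ} {c : ℝ}

theorem dotProduct_le_of_mem_stdSimplex (hu : u ∈ stdSimplex ℝ n) (hx : ∀ i, x i ≤ c) :
    u ⬝ᵥ x ≤ c :=
  calc u ⬝ᵥ x = ∑ i, u i * x i := rfl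
    _ ≤ ∑ i, u i * c := Finset.sum_le_sum fun i _ => mul_le_mul_of_nonneg_left (hx i) (hu.1 i)
    _ = c := by rw [← Finset.sum_mul, hu.2, one_mul]

theorem le_dotProduct_of_mem_stdSimplex (hu : u ∈ stdSimplex ℝ n) (hx : ∀ i, c ≤ x i) :
    c ≤ u ⬝ᵥ x := by
  simpa [neg_dotProduct] using
    dotProduct_le_of_mem_stdSimplex (x := -x) (c := -c) hu fun i => neg_le_neg (hx i)

theorem dotProduct_mulVec_le_of_mem_stdSimplex {A : Matrix n n ℝ} (hu : u ∈ stdSimplex ℝ n)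
    (hw : w ∈ stdSimplex ℝ n) (hA : ∀ i j, A i j ≤ c) : u ⬝ᵥ (A *ᵥ w) ≤ c :=
  dotProduct_le_of_mem_stdSimplex hu fun i => by
    rw [mulVec, dotProduct_comm]
    exact dotProduct_le_of_mem_stdSimplex hw (hA i)

theorem iInf_le_mulVec_of_mem_stdSimplex {A : Matrix n n ℝ} (hw : w ∈ stdSimplex ℝ n) (i : n) :
    ⨅ j, A i j ≤ (A *ᵥ w) i := by
  rw [mulVec, dotProduct_comm]
  exact le_dotProduct_of_mem_stdSimplex hw fun j => ciInf_le (Finite.bddBelow_range _) j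

theorem const_inv_card_mem_stdSimplex [Nonempty n] :
    (fun _ => 1 / (Fintype.card n : ℝ)) ∈ stdSimplex ℝ n :=
  ⟨fun _ => by positivity, by simp⟩

end stdSimplex

/-- Flat maximum effect, equal-weights bound: if `R` is a symmetric positive
semidefinite correlation matrix with unit diagonal and nonnegative entries,
`w` is a nonnegative weight vector summing to `1`, and `v = (1/d,…,1/d)` is
the equal-weight vector, with `vᵀRv > 0` and `wᵀRw > 0`, then the correlation
`r(v,w) = vᵀRw / √((vᵀRv)(wᵀRw))` between the equal-weight sum and the
arbitrarily weighted sum is bounded below by `(1/d) Σᵢ minⱼ Rᵢⱼ`. -/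
theorem flat_maximum_equal_weights (d : ℕ) (R : Matrix (Fin d) (Fin d) ℝ)
    (hR : R.PosSemidef) (hdiag : ∀ i, R i i = 1) (hnonneg : ∀ i j, 0 ≤ R i j)
    (w : Fin d → ℝ) (hw : ∀ i, 0 ≤ w i) (hwsum : ∑ i, w i = 1)
    (v : Fin d → ℝ) (hv : v = fun _ => 1 / (d : ℝ))
    (hvv : 0 < v ⬝ᵥ (R *ᵥ v)) (hww : 0 < w ⬝ᵥ (R *ᵥ w)) :
    v ⬝ᵥ (R *ᵥ w) / Real.sqrt ((v ⬝ᵥ (R *ᵥ v)) * (w ⬝ᵥ (R *ᵥ w)))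
      ≥ (1 / (d : ℝ)) * ∑ i, ⨅ j, R i j := by
  have : Nonempty (Fin d) := by
    by_contra h
    simp [not_nonempty_iff.mp h] at hvv
  have hv_mem : v ∈ stdSimplex ℝ (Fin d) := by
    simpa [hv] using const_inv_card_mem_stdSimplex (n := Fin d)
  have hw_mem : w ∈ stdSimplex ℝ (Fin d) := ⟨hw, hwsum⟩
  have hle_one : ∀ i j, R i j ≤ 1 := fun i j => by
    linarith [hR.two_mul_apply_le_add_s10 i j, hdiag i, hdiag j]
  have hbound_nonneg : 0 ≤ (1 / (d : ℝ)) * ∑ i, ⨅ j, R i j :=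
    mul_nonneg (by positivity) (Finset.sum_nonneg fun i _ => le_ciInf (hnonneg i))
  have hnum : (1 / (d : ℝ)) * ∑ i, ⨅ j, R i j ≤ v ⬝ᵥ (R *ᵥ w) := by
    rw [hv, dotProduct, ← Finset.mul_sum]
    gcongr with i
    exact iInf_le_mulVec_of_mem_stdSimplex hw_mem i
  have hden : Real.sqrt ((v ⬝ᵥ (R *ᵥ v)) * (w ⬝ᵥ (R *ᵥ w))) ≤ 1 :=
    Real.sqrt_le_one.mpr <| mul_le_one₀
      (dotProduct_mulVec_le_of_mem_stdSimplex hv_mem hv_mem hle_one) hww.le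
      (dotProduct_mulVec_le_of_mem_stdSimplex hw_mem hw_mem hle_one)
  exact hnum.trans <| le_div_self (hbound_nonneg.trans hnum)
    (Real.sqrt_pos.mpr (mul_pos hvv hww)) hden
end

section
/- Let ε be a real number with 0 ≤ ε < 1, let k > 0, and set k* = (k + ε)/(εk + 1). Then for every r ≥ 0, r ≥ k if and only if g_ε(r) ≥ k*, and r = k if and only if g_ε(r) = k*, where g_ε(r) = (r + ε)/(εr + 1). In particular, if k = 1 then k* = 1, so with equal misclassification costs the optimal decision threshold is unaffected by symmetric label noise. -/
/-- For `0 ≤ ε < 1` and a cost-determined threshold `k > 0`, setting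
`k* = (k+ε)/(εk+1)`, the decision rule is preserved: for every `r ≥ 0`,
`r ≥ k ↔ g_ε(r) ≥ k*` and `r = k ↔ g_ε(r) = k*`, where
`g_ε(r) = (r+ε)/(εr+1)`. In particular, if `k = 1` then `k* = 1`: with equal
misclassification costs the optimal threshold is unaffected by symmetric
label noise. -/
theorem threshold_transform (ε k kstar : ℝ) (hε₀ : 0 ≤ ε) (hε₁ : ε < 1)
    (hk : 0 < k) (hkstar : kstar = (k + ε) / (ε * k + 1)) :
    (∀ r : ℝ, 0 ≤ r →
        ((k ≤ r ↔ kstar ≤ (r + ε) / (ε * r + 1)) ∧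
          (r = k ↔ (r + ε) / (ε * r + 1) = kstar))) ∧
      (k = 1 → kstar = 1) := by
  have hdk : 0 < ε * k + 1 := by nlinarith
  have he2 : 0 < 1 - ε ^ 2 := by nlinarith
  constructor
  · intro r hr
    have hdr : 0 < ε * r + 1 := by nlinarith
    have hid : (r + ε) * (ε * k + 1) - (k + ε) * (ε * r + 1) = (r - k) * (1 - ε ^ 2) := by
      ring
    have key : kstar ≤ (r + ε) / (ε * r + 1) ↔ k ≤ r := by
      rw [hkstar, div_le_div_iff₀ hdk hdr]
      constructor
      · intro h
        nlinarith [mul_pos he2 hdr]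
      · intro h
        nlinarith [mul_nonneg (sub_nonneg.mpr h) he2.le]
    have key2 : (r + ε) / (ε * r + 1) = kstar ↔ r = k := by
      rw [hkstar, div_eq_div_iff hdr.ne' hdk.ne']
      constructor
      · intro h
        have : (r - k) * (1 - ε ^ 2) = 0 := by linarith [hid, h]
        rcases mul_eq_zero.mp this with h' | h'
        · linarith
        · linarith
      · intro h
        rw [h]
    exact ⟨key.symm, key2.symm⟩
  · intro h
    rw [hkstar, h]
    rw [div_eq_one_iff_eq (by nlinarith)]
    ring
end
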